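/- Let λ > 0 and ξ > 0 be ordinals. If ξ is a limit ordinal, then cf(e^λ(ξ)) = cf(ξ); if ξ is a successor ordinal, then cf(e^λ(ξ)) = max(cf(λ), ℵ_0). -/

import Mathlib

open Ordinal Set

noncomputable section

universe u

/-! ## Basic topological notions (explicit topologies) -/

/-- The derived set (set of limit points) of `A` w.r.t. the topology `t`. -/
def dSet {X : Type u} (t : TopologicalSpace X) (A : Set X) : Set X :=
  {x | ∀ U : Set X, t.IsOpen U → x ∈ U → ∃ y, y ∈ U ∩ A ∧ y ≠ x}

/-- Transfinite iterates of the derived-set operator, starting from the whole space. -/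
def dIter {X : Type u} (t : TopologicalSpace X) (o : Ordinal.{u}) : Set X :=
  Ordinal.limitRecOn o Set.univ (fun _ ih => dSet t ih)
    (fun o _ ih => ⋂ (o' : Ordinal.{u}) (h : o' < o), ih o' h)

/-- The Cantor–Bendixson rank of a point: the least `ξ` with `x ∉ d^{ξ+1} X`. -/
def ptRank {X : Type u} (t : TopologicalSpace X) (x : X) : Ordinal.{u} :=
  sInf {ξ : Ordinal.{u} | x ∉ dIter t (ξ + 1)}

/-- The rank of a space: `sup_{x ∈ X} (ρ(x) + 1)`. -/
def spRank (X : Type u) (t : TopologicalSpace X) : Ordinal.{u} :=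
  ⨆ x : X, ptRank t x + 1

/-- A space is scattered if every nonempty subset has an isolated point. -/
def IsScattered {X : Type u} (t : TopologicalSpace X) : Prop :=
  ∀ A : Set X, A.Nonempty → ∃ x ∈ A, ∃ U : Set X, t.IsOpen U ∧ U ∩ A = {x}

/-- A `d`-map: continuous, open and pointwise discrete. -/
def IsDMap {X : Type u} {Y : Type*} (t : TopologicalSpace X) (s : TopologicalSpace Y)
    (f : X → Y) : Prop :=
  @Continuous _ _ t s f ∧ @IsOpenMap _ _ t s f ∧
    ∀ y : Y, ∀ x : X, f x = y →
      ∃ U : Set X, t.IsOpen U ∧ x ∈ U ∧ ∀ z ∈ U, f z = y → z = x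

/-! ## Hyperexponentials and hyperlogarithms -/

/-- The exponential `e ξ = -1 + ω^ξ`. -/
def eFun (x : Ordinal.{u}) : Ordinal.{u} := ω ^ x - 1

/-- `E` is the family of hyperexponentials: a family of normal functions with `E 1 = e`,
`E (α+β) = E α ∘ E β`, pointwise minimal among all such families. -/
def IsHyperexpFamily (E : Ordinal.{u} → Ordinal.{u} → Ordinal.{u}) : Prop :=
  (∀ a, Order.IsNormal (E a)) ∧ E 1 = eFun ∧ (∀ a b, E (a + b) = E a ∘ E b) ∧
    ∀ F : Ordinal.{u} → Ordinal.{u} → Ordinal.{u},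
      (∀ a, Order.IsNormal (F a)) → F 1 = eFun → (∀ a b, F (a + b) = F a ∘ F b) →
        ∀ a b, E a b ≤ F a b

/-- The end logarithm: `ℓ 0 = 0` and `ℓ ξ` is the unique `β` with `ξ = α + ω^β`. -/
def ellFun (x : Ordinal.{u}) : Ordinal.{u} :=
  if x = 0 then 0 else sInf {b : Ordinal.{u} | ∃ a, x = a + ω ^ b}

/-- An initial function maps initial segments onto initial segments. -/
def IsInitialFun (f : Ordinal.{u} → Ordinal.{u}) : Prop :=
  ∀ o : Ordinal.{u}, ∃ o' : Ordinal.{u}, f '' Set.Iio o = Set.Iio o'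

/-- `L` is the family of hyperlogarithms: a family of initial functions with `L 1 = ℓ`,
`L (α+β) = L β ∘ L α`, pointwise maximal among all such families. -/
def IsHyperlogFamily (L : Ordinal.{u} → Ordinal.{u} → Ordinal.{u}) : Prop :=
  (∀ a, IsInitialFun (L a)) ∧ L 1 = ellFun ∧ (∀ a b, L (a + b) = L b ∘ L a) ∧
    ∀ M : Ordinal.{u} → Ordinal.{u} → Ordinal.{u},
      (∀ a, IsInitialFun (M a)) → M 1 = ellFun → (∀ a b, M (a + b) = M b ∘ M a) →
        ∀ a b, M a b ≤ L a b

/-! ## Icard topologies -/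

/-- The generalized Icard topology `τ_λ` based on a space `(X, t)`, relative to a family `L`
of hyperlogarithms: the least topology containing `t` and all sets
`(α, β]_ξ = {x | α < ℓ^ξ ρ_t(x) ≤ β}` (including `α = -1`, i.e. `[0, β]_ξ`), for `ξ < λ`. -/
def IcardTop {X : Type u} (L : Ordinal.{u} → Ordinal.{u} → Ordinal.{u})
    (t : TopologicalSpace X) (lam : Ordinal.{u}) : TopologicalSpace X :=
  t ⊓ TopologicalSpace.generateFrom
    {S : Set X | ∃ ξ < lam,
      (∃ b : Ordinal.{u}, S = {x | L ξ (ptRank t x) ≤ b}) ∨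
      (∃ a b : Ordinal.{u}, a < b ∧ S = {x | a < L ξ (ptRank t x) ∧ L ξ (ptRank t x) ≤ b})}

/-! ## Ordinal spaces -/

/-- The ordinal corresponding to a point of `Θ.ToType`. -/
def ordVal {Θ : Ordinal.{u}} (x : Θ.ToType) : Ordinal.{u} :=
  @Ordinal.typein Θ.ToType (· < ·) isWellOrder_lt x

/-- The left topology `I₀` on (the canonical type of order type) `Θ`, generated by the
intervals `[0, β]`. -/
def leftTop (Θ : Ordinal.{u}) : TopologicalSpace Θ.ToType :=
  TopologicalSpace.generateFrom {S : Set Θ.ToType | ∃ b : Θ.ToType, S = Set.Iic b}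

/-- The interval topology `I₁` on `Θ`, generated by the sets `[0, β]` and `(α, β]`. -/
def intervalTop (Θ : Ordinal.{u}) : TopologicalSpace Θ.ToType :=
  TopologicalSpace.generateFrom
    {S : Set Θ.ToType | (∃ b, S = Set.Iic b) ∨ ∃ a b : Θ.ToType, S = Set.Ioc a b}

/-- The Icard topology `I_λ = (I₀)_λ` on the ordinal `Θ`: the least topology containing the
left topology and all sets `{x < Θ | α < ℓ^ξ x ≤ β}` for `ξ < λ`. -/
def ordIcard (L : Ordinal.{u} → Ordinal.{u} → Ordinal.{u}) (Θ lam : Ordinal.{u}) :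
    TopologicalSpace Θ.ToType :=
  leftTop Θ ⊓ TopologicalSpace.generateFrom
    {S : Set Θ.ToType | ∃ ξ < lam,
      (∃ b : Ordinal.{u}, S = {x | L ξ (ordVal x) ≤ b}) ∨
      (∃ a b : Ordinal.{u}, a < b ∧ S = {x | a < L ξ (ordVal x) ∧ L ξ (ordVal x) ≤ b})}

/-! ## Modal logic: GL and topological (d-)semantics -/

/-- Formulas of the basic modal language. -/
inductive Fml : Type
  | bot : Fml
  | var : ℕ → Fml
  | imp : Fml → Fml → Fml
  | box : Fml → Fml

namespace Fml

/-- Negation. -/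
def neg (p : Fml) : Fml := p.imp .bot

/-- Diamond. -/
def dia (p : Fml) : Fml := (p.neg.box).neg

end Fml

/-- The valuation determined by an assignment `V` of sets to propositional variables, in the
`d`-semantics: `⟦◇φ⟧ = d⟦φ⟧`, i.e. `⟦◻φ⟧` is the complement of the derived set of the
complement of `⟦φ⟧`. -/
def fval {X : Type u} (t : TopologicalSpace X) (V : ℕ → Set X) : Fml → Set X
  | .bot => ∅
  | .var n => V n
  | .imp p q => (fval t V p)ᶜ ∪ fval t V q
  | .box p => (dSet t (fval t V p)ᶜ)ᶜ

/-- Classical tautologies (boxed formulas and variables treated as atoms). -/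
def Tautology (φ : Fml) : Prop :=
  ∀ v : Fml → Bool, v .bot = false → (∀ p q : Fml, v (p.imp q) = (!(v p) || v q)) →
    v φ = true

/-- Provability in the Gödel–Löb provability logic `GL`. -/
inductive GLProv : Fml → Prop
  | taut {φ : Fml} : Tautology φ → GLProv φ
  | axK (p q : Fml) : GLProv (((p.imp q).box).imp ((p.box).imp q.box))
  | axLob (p : Fml) : GLProv ((((p.box).imp p).box).imp p.box)
  | mp {p q : Fml} : GLProv (p.imp q) → GLProv p → GLProv q
  | nec {p : Fml} : GLProv p → GLProv p.box

/-- A set of formulas is GL-consistent if no finite conjunction of its members provably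
implies `⊥`. -/
def GLConsistent (Γ : Set Fml) : Prop :=
  ¬ ∃ l : List Fml, (∀ φ ∈ l, φ ∈ Γ) ∧ GLProv (l.foldr .imp .bot)

/-- `Γ` is satisfied in the space `(X, t)`. -/
def SatisfiedIn {X : Type u} (t : TopologicalSpace X) (Γ : Set Fml) : Prop :=
  ∃ (V : ℕ → Set X) (x : X), ∀ φ ∈ Γ, x ∈ fval t V φ

/-- `GL` is strongly complete with respect to `(X, t)`. -/
def StronglyCompleteFor {X : Type u} (t : TopologicalSpace X) : Prop :=
  ∀ Γ : Set Fml, GLConsistent Γ → SatisfiedIn t Γ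

/-- Validity of a formula in a space under the `d`-semantics. -/
def ValidIn {X : Type u} (t : TopologicalSpace X) (φ : Fml) : Prop :=
  ∀ V : ℕ → Set X, fval t V φ = Set.univ

/-! ## Trees and ω-bouquets -/

/-- The upset topology of a relation: opens are the `R`-upward closed sets. -/
def upTop {T : Type u} (R : T → T → Prop) : TopologicalSpace T where
  IsOpen U := ∀ x ∈ U, ∀ y, R x y → y ∈ U
  isOpen_univ := fun x _ y _ => trivial
  isOpen_inter := fun s t hs ht x hx y hR => ⟨hs x hx.1 y hR, ht x hx.2 y hR⟩
  isOpen_sUnion := fun S hS x hx y hR => by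
    obtain ⟨s, hsS, hxs⟩ := hx
    exact ⟨s, hsS, hS s hsS x hxs y hR⟩

/-- A countable, converse well-founded tree. -/
structure IsOmegaTree {T : Type u} (R : T → T → Prop) : Prop where
  countable : Countable T
  trans : ∀ a b c, R a b → R b c → R a c
  irrefl : ∀ a, ¬ R a a
  predWellOrdered : ∀ t : T, IsWellOrder {s : T // R s t} (fun a b => R a.1 b.1)
  root : ∃! r : T, ∀ s : T, ¬ R s r
  converseWellFounded : WellFounded (fun a b : T => R b a)

/-- The daughters (immediate successors) of a node. -/
def daughters {T : Type u} (R : T → T → Prop) (w : T) : Set T :=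
  {v | R w v ∧ ¬ ∃ u, R w u ∧ R u v}

/-- The bouquet topology `σ_R`: the least topology extending the upset topology such that
whenever `w` has limit rank, `(v_i)` enumerates the daughters of `w` without repetition and
`n < ω`, the set `{w} ∪ ⋃_{i > n} ({v_i} ∪ R(v_i))` is open. -/
def sigmaTop {T : Type u} (R : T → T → Prop) : TopologicalSpace T :=
  upTop R ⊓ TopologicalSpace.generateFrom
    {S : Set T | ∃ w : T, Order.IsSuccLimit (ptRank (upTop R) w) ∧
      ∃ v : ℕ → T, Function.Injective v ∧ Set.range v = daughters R w ∧
        ∃ n : ℕ, S = {w} ∪ ⋃ (i : ℕ) (_ : n < i), ({v i} ∪ {u | R (v i) u})}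

/-! ## The club topology (via its neighborhood characterization) -/

/-- `C` is a club in (i.e. a closed unbounded subset of) the point `x`. -/
def IsClubIn {Θ : Ordinal.{u}} (C : Set Θ.ToType) (x : Θ.ToType) : Prop :=
  (∀ y ∈ C, y < x) ∧ (∀ z, z < x → ∃ y ∈ C, z < y) ∧
    ∀ z, z < x → (∃ w, w < z) → (∀ w, w < z → ∃ y ∈ C, w < y ∧ y < z) → z ∈ C

/-- `t` is the club topology on `Θ`: a set `U` is a neighborhood of a point `x ∈ U` iff
`U` contains a club in `x` or `cf(x) < ℵ₁`. -/
def IsClubTop (Θ : Ordinal.{u}) (t : TopologicalSpace Θ.ToType) : Prop :=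
  ∀ (U : Set Θ.ToType) (x : Θ.ToType), x ∈ U →
    (U ∈ @nhds _ t x ↔
      (Ordinal.cof (ordVal x) < Cardinal.aleph 1 ∨ ∃ C ⊆ U, IsClubIn C x))

/-!
For limit `ξ` the claim is the continuity of the normal function `e^λ`. For `ξ = ζ + 1` write
`λ = ρ + ω ^ γ`; since `e^ρ` is normal and `e^(ω ^ γ) (ζ + 1)` is a limit, only the cofinality of
`e^(ω ^ γ) (ζ + 1)` matters. For `γ = 0` this is `ω ^ (ζ + 1)`, of cofinality `ℵ₀`. For `γ > 0`,
`e^(ω ^ γ)` absorbs every `e^c` with `c < ω ^ γ`, so it takes values among their common fixed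
points and is pointwise at least their enumeration. Conversely, composing generators along Cantor
normal forms, with the generator at `ω ^ γ` replaced by this enumeration, yields another admissible
family, so minimality makes `e^(ω ^ γ)` equal to the enumeration. Hence
`e^(ω ^ γ) (ζ + 1) = sup_{c < ω ^ γ} e^c (e^(ω ^ γ) ζ + 1)`, a strictly increasing supremum of
length `ω ^ γ`.
-/

open Order

section CnfFamily

variable (f : Ordinal.{u} → Ordinal.{u} → Ordinal.{u})

/-- The family with `cnfFamily f (ω ^ γ) = f γ`, extended to all indices along the Cantor normal
form: `cnfFamily f (ω ^ γ₁ + ⋯ + ω ^ γₙ) = f γ₁ ∘ ⋯ ∘ f γₙ`. -/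
def cnfFamily (a : Ordinal.{u}) : Ordinal.{u} → Ordinal.{u} :=
  if a = 0 then id else f (log ω a) ∘ cnfFamily (a - ω ^ log ω a)
termination_by a
decreasing_by exact sub_omega0_opow_log_lt ‹_›

theorem cnfFamily_zero : cnfFamily f 0 = id := by
  rw [cnfFamily, if_pos rfl]

theorem cnfFamily_of_ne_zero {a : Ordinal.{u}} (ha : a ≠ 0) :
    cnfFamily f a = f (log ω a) ∘ cnfFamily f (a - ω ^ log ω a) := by
  rw [cnfFamily, if_neg ha]

theorem cnfFamily_opow_add {γ b : Ordinal.{u}} (hb : b < ω ^ (γ + 1)) :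
    cnfFamily f (ω ^ γ + b) = f γ ∘ cnfFamily f b := by
  have hne : ω ^ γ + b ≠ 0 := (add_pos_of_pos_of_nonneg (opow_pos γ omega0_pos) zero_le).ne'
  have hlog : log ω (ω ^ γ + b) = γ :=
    (log_eq_iff one_lt_omega0 hne γ).2
      ⟨le_self_add, (isPrincipal_add_omega0_opow _) ((opow_lt_opow_iff_right one_lt_omega0).2
        (lt_add_one γ)) hb⟩
  rw [cnfFamily_of_ne_zero f hne, hlog, Ordinal.add_sub_cancel]

theorem cnfFamily_opow (γ : Ordinal.{u}) : cnfFamily f (ω ^ γ) = f γ := by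
  simpa [cnfFamily_zero] using cnfFamily_opow_add f (opow_pos (γ + 1) omega0_pos)

theorem isNormal_cnfFamily (hf : ∀ γ, IsNormal (f γ)) (a : Ordinal.{u}) :
    IsNormal (cnfFamily f a) := by
  induction a using WellFoundedLT.induction with
  | _ a IH =>
    rcases eq_or_ne a 0 with rfl | ha
    · rw [cnfFamily_zero]
      exact IsNormal.id
    · rw [cnfFamily_of_ne_zero f ha]
      exact (hf _).comp (IH _ (sub_omega0_opow_log_lt ha))

variable {f}

theorem cnfFamily_comp_of_lt_opow (habs : ∀ γ δ, γ < δ → f γ ∘ f δ = f δ) {δ : Ordinal.{u}} :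
    ∀ a < ω ^ δ, cnfFamily f a ∘ f δ = f δ := by
  intro a
  induction a using WellFoundedLT.induction with
  | _ a IH =>
    intro ha
    rcases eq_or_ne a 0 with rfl | h0
    · rw [cnfFamily_zero, Function.id_comp]
    · have hlog : log ω a < δ := (lt_opow_iff_log_lt one_lt_omega0 h0).1 ha
      rw [cnfFamily_of_ne_zero f h0, Function.comp_assoc,
        IH _ (sub_omega0_opow_log_lt h0) ((Ordinal.sub_le_self _ _).trans_lt ha), habs _ _ hlog]

theorem cnfFamily_add (habs : ∀ γ δ, γ < δ → f γ ∘ f δ = f δ) (a b : Ordinal.{u}) :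
    cnfFamily f (a + b) = cnfFamily f a ∘ cnfFamily f b := by
  induction a using WellFoundedLT.induction with
  | _ a IH =>
    rcases eq_or_ne a 0 with rfl | ha
    · rw [zero_add, cnfFamily_zero, Function.id_comp]
    set l := log ω a
    have ha_lt : a < ω ^ (l + 1) := lt_opow_succ_log_self one_lt_omega0 a
    have ha_eq : ω ^ l + (a - ω ^ l) = a := Ordinal.add_sub_cancel_of_le (opow_log_le_self ω ha)
    rcases lt_or_ge b (ω ^ (l + 1)) with hb | hb
    · -- `a + b` and `a` share their leading Cantor normal form term
      have hrest : a - ω ^ l + b < ω ^ (l + 1) :=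
        isPrincipal_add_omega0_opow _ ((Ordinal.sub_le_self _ _).trans_lt ha_lt) hb
      rw [← ha_eq, add_assoc, cnfFamily_opow_add f hrest,
        cnfFamily_opow_add f ((Ordinal.sub_le_self _ _).trans_lt ha_lt),
        IH _ (sub_omega0_opow_log_lt ha)]
      rfl
    · -- `a` is absorbed by the leading term of `b`
      have hb0 : b ≠ 0 := (opow_pos _ omega0_pos).trans_le hb |>.ne'
      have hab : a < ω ^ log ω b :=
        ha_lt.trans_le (opow_le_opow_right omega0_pos (le_log_of_opow_le one_lt_omega0 hb))
      have hsum : a + b = b := by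
        rw [← Ordinal.add_sub_cancel_of_le (opow_log_le_self ω hb0), ← add_assoc,
          add_omega0_opow hab]
      rw [hsum, cnfFamily_of_ne_zero f hb0, ← Function.comp_assoc,
        cnfFamily_comp_of_lt_opow habs a hab]

end CnfFamily

theorem exists_eq_add_omega0_opow {a : Ordinal.{u}} (ha : a ≠ 0) :
    ∃ ρ g : Ordinal.{u}, a = ρ + ω ^ g := by
  induction a using WellFoundedLT.induction with
  | _ a IH =>
    have hsplit : ω ^ log ω a + (a - ω ^ log ω a) = a :=
      Ordinal.add_sub_cancel_of_le (opow_log_le_self ω ha)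
    rcases eq_or_ne (a - ω ^ log ω a) 0 with h0 | h0
    · exact ⟨0, log ω a, by simpa [h0] using hsplit.symm⟩
    · obtain ⟨ρ, g, hρ⟩ := IH _ (sub_omega0_opow_log_lt ha) h0
      exact ⟨ω ^ log ω a + ρ, g, by rw [add_assoc, ← hρ, hsplit]⟩

theorem eFun_of_ne_zero {x : Ordinal.{u}} (hx : x ≠ 0) : eFun x = ω ^ x := by
  have h1 : (1 : Ordinal.{u}) < ω ^ x := one_lt_omega0.trans_le (left_le_opow ω hx.bot_lt)
  rw [eFun, ← add_omega0_opow h1, Ordinal.add_sub_cancel, add_omega0_opow h1]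

theorem add_one_lt_eFun (x : Ordinal.{u}) : x + 1 < eFun (x + 1) := by
  have hx : x + 1 ≠ 0 := (add_pos_of_right zero_lt_one x).ne'
  rw [eFun_of_ne_zero hx]
  refine (right_le_opow _ one_lt_omega0).lt_of_ne fun h => ?_
  exact not_isSuccLimit_add_one x (h ▸ isSuccLimit_opow_left isSuccLimit_omega0 hx)

def derivBelow (E : Ordinal.{u} → Ordinal.{u} → Ordinal.{u}) (a : Ordinal.{u}) :
    Ordinal.{u} → Ordinal.{u} :=
  derivFamily fun c : Iio a => E c

theorem isNormal_derivBelow (E : Ordinal.{u} → Ordinal.{u} → Ordinal.{u}) (a : Ordinal.{u}) :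
    IsNormal (derivBelow E a) :=
  isNormal_derivFamily _

def swapGen (E : Ordinal.{u} → Ordinal.{u} → Ordinal.{u}) (g γ : Ordinal.{u}) :
    Ordinal.{u} → Ordinal.{u} :=
  if γ = g then derivBelow E (ω ^ g) else E (ω ^ γ)

open scoped Cardinal

namespace IsHyperexpFamily

variable {E : Ordinal.{u} → Ordinal.{u} → Ordinal.{u}}

theorem isNormal (hE : IsHyperexpFamily E) (a : Ordinal.{u}) : IsNormal (E a) := hE.1 a

theorem apply_add (hE : IsHyperexpFamily E) (a b x : Ordinal.{u}) :
    E (a + b) x = E a (E b x) :=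
  congrFun (hE.2.2.1 a b) x

theorem apply_one (hE : IsHyperexpFamily E) (x : Ordinal.{u}) : E 1 x = eFun x :=
  congrFun hE.2.1 x

theorem apply_zero (hE : IsHyperexpFamily E) (x : Ordinal.{u}) : E 0 x = x :=
  (hE.isNormal 1).strictMono.injective (by rw [← hE.apply_add, add_zero])

theorem apply_lt_apply_of_lt (hE : IsHyperexpFamily E) {η c d : Ordinal.{u}} (hη : η < eFun η)
    (hcd : c < d) : E c η < E d η := by
  rw [← Ordinal.add_sub_cancel_of_le (add_one_le_of_lt hcd), add_assoc, hE.apply_add,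
    hE.apply_add]
  refine (hE.isNormal c).strictMono (hη.trans_le ?_)
  rw [← hE.apply_one]
  exact (hE.isNormal 1).monotone (hE.isNormal _).strictMono.le_apply

theorem isSuccLimit_apply (hE : IsHyperexpFamily E) {a x : Ordinal.{u}} (ha : a ≠ 0)
    (hx : x ≠ 0) : IsSuccLimit (E a x) := by
  have hEx : E (a - 1) x ≠ 0 := (hx.bot_lt.trans_le (hE.isNormal _).strictMono.le_apply).ne'
  rw [← Ordinal.add_sub_cancel_of_le (one_le_iff_ne_zero.2 ha), hE.apply_add, hE.apply_one,
    eFun_of_ne_zero hEx]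
  exact isSuccLimit_opow_left isSuccLimit_omega0 hEx

theorem apply_apply_opow (hE : IsHyperexpFamily E) {c g : Ordinal.{u}} (hc : c < ω ^ g)
    (x : Ordinal.{u}) : E c (E (ω ^ g) x) = E (ω ^ g) x := by
  rw [← hE.apply_add, add_omega0_opow hc]

theorem derivBelow_le_apply_opow (hE : IsHyperexpFamily E) (g x : Ordinal.{u}) :
    derivBelow E (ω ^ g) x ≤ E (ω ^ g) x := by
  have hfix : ∀ y, ∃ o, derivBelow E (ω ^ g) o = E (ω ^ g) y := fun y =>
    (fp_iff_derivFamily fun c : Iio (ω ^ g) => hE.isNormal c).1 fun c =>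
      hE.apply_apply_opow c.2 y
  choose k hk using hfix
  have hk_mono : StrictMono k := fun a b hab => by
    rw [← (isNormal_derivBelow E _).strictMono.lt_iff_lt, hk, hk]
    exact (hE.isNormal _).strictMono hab
  rw [← hk]
  exact (isNormal_derivBelow E _).strictMono.monotone hk_mono.le_apply

theorem isNormal_swapGen (hE : IsHyperexpFamily E) (g γ : Ordinal.{u}) :
    IsNormal (swapGen E g γ) := by
  unfold swapGen
  split_ifs
  · exact isNormal_derivBelow E _
  · exact hE.isNormal _

theorem swapGen_comp_of_lt (hE : IsHyperexpFamily E) (g : Ordinal.{u}) {γ δ : Ordinal.{u}}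
    (hγδ : γ < δ) : swapGen E g γ ∘ swapGen E g δ = swapGen E g δ := by
  have hopow : ω ^ γ < ω ^ δ := (opow_lt_opow_iff_right one_lt_omega0).2 hγδ
  funext x
  unfold swapGen
  split_ifs with hγ hδ hδ
  · exact absurd (hγ.trans hδ.symm) hγδ.ne
  · subst hγ
    set y := E (ω ^ δ) x
    have hy : E (ω ^ γ) y = y := by rw [← hE.apply_add, add_omega0_opow hopow]
    exact le_antisymm (hy ▸ hE.derivBelow_le_apply_opow γ y)
      (isNormal_derivBelow E _).strictMono.le_apply
  · subst hδ
    exact derivFamily_fp (f := fun c : Iio (ω ^ δ) => E c) (i := ⟨_, hopow⟩) (hE.isNormal _) x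
  · exact hE.apply_apply_opow hopow x

theorem apply_opow_eq_derivBelow (hE : IsHyperexpFamily E) {g : Ordinal.{u}} (hg : g ≠ 0) :
    E (ω ^ g) = derivBelow E (ω ^ g) := by
  have hF1 : cnfFamily (swapGen E g) 1 = eFun := by
    rw [← opow_zero ω, cnfFamily_opow, swapGen, if_neg (Ne.symm hg), opow_zero, hE.2.1]
  have hmin := hE.2.2.2 (cnfFamily (swapGen E g)) (isNormal_cnfFamily _ (hE.isNormal_swapGen g))
    hF1 (cnfFamily_add fun _ _ => hE.swapGen_comp_of_lt g) (ω ^ g)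
  rw [cnfFamily_opow, swapGen, if_pos rfl] at hmin
  exact funext fun x => (hmin x).antisymm (hE.derivBelow_le_apply_opow g x)

theorem nfpFamily_eq_iSup (hE : IsHyperexpFamily E) (g η : Ordinal.{u}) :
    nfpFamily (fun c : Iio (ω ^ g) => E c) η = ⨆ c : Iio (ω ^ g), E c η := by
  have hfold : ∀ l : List (Iio (ω ^ g)), ∃ c : Iio (ω ^ g),
      l.foldr (fun c : Iio (ω ^ g) => E c) η = E c η := by
    intro l
    induction l with
    | nil => exact ⟨⟨0, opow_pos g omega0_pos⟩, (hE.apply_zero η).symm⟩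
    | cons d l ih =>
      obtain ⟨c, hc⟩ := ih
      exact ⟨⟨d + c, (isPrincipal_add_omega0_opow g) d.2 c.2⟩,
        by rw [List.foldr_cons, hc, hE.apply_add]⟩
  refine le_antisymm (nfpFamily_le fun l => ?_) (Ordinal.iSup_le fun c => ?_)
  · obtain ⟨c, hc⟩ := hfold l
    exact hc ▸ Ordinal.le_iSup _ c
  · exact foldr_le_nfpFamily _ η [c]

theorem apply_opow_add_one (hE : IsHyperexpFamily E) {g : Ordinal.{u}} (hg : g ≠ 0)
    (ζ : Ordinal.{u}) :
    E (ω ^ g) (ζ + 1) = ⨆ c : Iio (ω ^ g), E c (E (ω ^ g) ζ + 1) := by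
  rw [hE.apply_opow_eq_derivBelow hg, derivBelow, derivFamily_add_one, hE.nfpFamily_eq_iSup]

theorem cof_apply_opow_add_one (hE : IsHyperexpFamily E) (g ζ : Ordinal.{u}) :
    (E (ω ^ g) (ζ + 1)).cof = max (ω ^ g).cof ℵ₀ := by
  rcases eq_or_ne g 0 with rfl | hg
  · rw [opow_zero, hE.apply_one, eFun_of_ne_zero (add_pos_of_right zero_lt_one ζ).ne',
      opow_add_one, cof_mul (opow_ne_zero ζ omega0_ne_zero) isSuccLimit_omega0.isSuccPrelimit,
      cof_omega0, cof_one, max_eq_right Cardinal.one_le_aleph0]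
  · have hlim : IsSuccLimit (ω ^ g : Ordinal.{u}) := isSuccLimit_opow_left isSuccLimit_omega0 hg
    rw [hE.apply_opow_add_one hg, max_eq_left (aleph0_le_cof_iff.2 (one_lt_cof_iff.2 hlim))]
    exact cof_iSup_Iio (fun _ _ hcd => hE.apply_lt_apply_of_lt (add_one_lt_eFun _) hcd)
      hlim.isSuccPrelimit

end IsHyperexpFamily

theorem cof_hyperexp_general
    (E : Ordinal.{u} → Ordinal.{u} → Ordinal.{u}) (hE : IsHyperexpFamily E)
    (lam ξ : Ordinal.{u}) (hlam : lam ≠ 0) :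
    (Order.IsSuccLimit ξ → (E lam ξ).cof = ξ.cof) ∧
      (∀ ζ : Ordinal.{u}, ξ = ζ + 1 → (E lam ξ).cof = max lam.cof Cardinal.aleph0) := by
  refine ⟨cof_map_of_isNormal (hE.isNormal lam), ?_⟩
  rintro ζ rfl
  obtain ⟨ρ, g, rfl⟩ := exists_eq_add_omega0_opow hlam
  have hlim : IsSuccLimit (E (ω ^ g) (ζ + 1)) :=
    hE.isSuccLimit_apply (opow_ne_zero g omega0_ne_zero) (add_pos_of_right zero_lt_one ζ).ne'
  rw [hE.apply_add, cof_map_of_isNormal (hE.isNormal ρ) hlim, hE.cof_apply_opow_add_one,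
    cof_add ρ (opow_ne_zero g omega0_ne_zero)]

/-- For `λ > 0` and `ξ > 0`: if `ξ` is a limit then
`cf(e^λ(ξ)) = cf(ξ)`, and if `ξ` is a successor then `cf(e^λ(ξ)) = max(cf(λ), ℵ₀)`. -/
theorem cof_hyperexp
    (E : Ordinal.{u} → Ordinal.{u} → Ordinal.{u}) (hE : IsHyperexpFamily E)
    (lam ξ : Ordinal.{u}) (hlam : lam ≠ 0) (hξ : ξ ≠ 0) :
    (Order.IsSuccLimit ξ → (E lam ξ).cof = ξ.cof) ∧
      (∀ ζ : Ordinal.{u}, ξ = ζ + 1 → (E lam ξ).cof = max lam.cof Cardinal.aleph0) :=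
  cof_hyperexp_general E hE lam ξ hlam
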